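/- arXiv:1611.04458 — 2 statements merged into one kernel-verified Lean document; each statement's English description precedes it below -/
import Mathlib

section
/- Let f : G → H be a semi-planar function between finite abelian groups of the same even order k, and suppose f is a bijection and k > 2. Then the incidence graph of S(G,H;f) is connected. -/
/-- A function `f : G → H` is *semi-planar* if for every nonzero `a : G` and every
`y : H`, the equation `f (x + a) - f x = y` has either 0 or exactly 2 solutions. -/
def IsSemiPlanar {G H : Type*} [AddGroup G] [AddGroup H] (f : G → H) : Prop :=
  ∀ a : G, a ≠ 0 → ∀ y : H,
    Nat.card {x : G // f (x + a) - f x = y} = 0 ∨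
    Nat.card {x : G // f (x + a) - f x = y} = 2

/-- The point `p = (x, y)` is incident with the line `l = L(a, b)` iff `y = f (x - a) + b`. -/
def Incid {G H : Type*} [Sub G] [Add H] (f : G → H) (p l : G × H) : Prop :=
  p.2 = f (p.1 - l.1) + l.2

/-- The adjacency relation of the incidence graph of `S(G,H;f)`: points on the left,
lines on the right, a point adjacent to a line iff incident. -/
def IncAdj {G H : Type*} [Sub G] [Add H] (f : G → H) :
    (G × H) ⊕ (G × H) → (G × H) ⊕ (G × H) → Prop
  | Sum.inl p, Sum.inr l => Incid f p l
  | Sum.inr l, Sum.inl p => Incid f p l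
  | _, _ => False

/-- The incidence graph of `S(G,H;f)`. -/
def incGraph {G H : Type*} [Sub G] [Add H] (f : G → H) :
    SimpleGraph ((G × H) ⊕ (G × H)) where
  Adj := IncAdj f
  symm := by
    constructor
    intro v w h
    cases v <;> cases w <;> exact h
  loopless := by
    constructor
    intro v h
    cases v <;> exact h

/-- The line `L(a,b)` belongs to the substructure `S₁`, i.e. lies in the same
connected component of the incidence graph as the line `L(0,0)`. -/
def InS1 {G H : Type*} [SubtractionMonoid G] [SubNegMonoid H] (f : G → H) (l : G × H) : Prop :=
  (incGraph f).Reachable (Sum.inr l) (Sum.inr ((0 : G), (0 : H)))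


/-!
The lines of `S(G,H;f)` reachable from `L(0,0)` form a subgroup `T` of `G × H`, because
translating both coordinates is an automorphism of the incidence graph. The lines `L(0,0)` and
`L(d,c)` meet exactly when `c` lies in the difference set `D_d = {f (u + d) - f u}`, so `T`
contains `(0, c₁ - c₂)` for all `c₁, c₂ ∈ D_d`. Let `K` be the subgroup of `H` these
differences generate. Semi-planarity gives `|D_d| = k/2`, so `K` has a nonzero element `t`, and
by surjectivity `t ∈ D_d` for some `d ≠ 0`. Then `D_d ⊆ t + K = K` while `0 ∉ D_d` by
injectivity, so `|K| > k/2` and `K = H`. Hence `T` contains `{0} × H` and every `(a, f a - f 0)`,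
so `T = G × H`; every point lies on a line, so the graph is connected.
-/

open Finset Function

lemma AddSubgroup.eq_top_of_card_lt_two_mul {H : Type*} [AddGroup H] [Finite H]
    (K : AddSubgroup H) (hK : Nat.card H < 2 * Nat.card K) : K = ⊤ := by
  by_contra hne
  have h2 : 2 ≤ K.index := K.one_lt_index_of_ne_top hne
  have := K.card_mul_index
  nlinarith

section DiffSet

variable {G H : Type*} [AddCommGroup G] [AddCommGroup H] [Fintype G] [DecidableEq H]
  (f : G → H)

def diffSet (d : G) : Finset H :=
  univ.image fun u => f (u + d) - f u

variable {f}

lemma mem_diffSet {d : G} {c : H} : c ∈ diffSet f d ↔ ∃ u, f (u + d) - f u = c := by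
  simp [diffSet]

lemma IsSemiPlanar.two_mul_card_diffSet (hf : IsSemiPlanar f) {d : G} (hd : d ≠ 0) :
    2 * #(diffSet f d) = Fintype.card G := by
  have hfiber : ∀ c ∈ diffSet f d, #{u | f (u + d) - f u = c} = 2 := by
    intro c hc
    obtain ⟨u, hu⟩ := mem_diffSet.mp hc
    have hpos : 0 < #{u | f (u + d) - f u = c} := card_pos.mpr ⟨u, by simp [hu]⟩
    have hcard := hf d hd c
    rw [Nat.card_eq_fintype_card, Fintype.card_subtype] at hcard
    omega
  rw [← card_univ, card_eq_sum_card_image (fun u => f (u + d) - f u), ← diffSet,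
    sum_congr rfl hfiber, sum_const, smul_eq_mul, mul_comm]

lemma zero_notMem_diffSet (hinj : Injective f) {d : G} (hd : d ≠ 0) :
    (0 : H) ∉ diffSet f d := by
  rw [mem_diffSet]
  rintro ⟨u, hu⟩
  exact hd (by simpa using hinj (sub_eq_zero.mp hu))

lemma exists_mem_diffSet (hsurj : Surjective f) {c : H} (hc : c ≠ 0) :
    ∃ d ≠ 0, c ∈ diffSet f d := by
  obtain ⟨d, hd⟩ := hsurj (c + f 0)
  refine ⟨d, ?_, mem_diffSet.mpr ⟨0, by rw [zero_add, hd, add_sub_cancel_right]⟩⟩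
  rintro rfl
  exact hc (by simpa using hd)

lemma IsSemiPlanar.eq_top_of_sub_mem [Fintype H] (hf : IsSemiPlanar f) (hbij : Bijective f)
    (hcard : Fintype.card G = Fintype.card H) (hk : 2 < Fintype.card G) (K : AddSubgroup H)
    (hK : ∀ d ≠ 0, ∀ c₁ ∈ diffSet f d, ∀ c₂ ∈ diffSet f d, c₁ - c₂ ∈ K) : K = ⊤ := by
  obtain ⟨d₀, hd₀⟩ := Fintype.exists_ne_of_one_lt_card (by omega) (0 : G)
  have hD₀ := hf.two_mul_card_diffSet hd₀
  obtain ⟨c₁, hc₁, c₂, hc₂, hne⟩ := one_lt_card.mp (show 1 < #(diffSet f d₀) by omega)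
  obtain ⟨d, hd, ht⟩ := exists_mem_diffSet hbij.2 (sub_ne_zero.mpr hne)
  have hsub : (diffSet f d : Set H) ⊆ (K : Set H) \ {0} := by
    intro c hc
    refine ⟨?_, fun h0 => zero_notMem_diffSet hbij.1 hd (h0 ▸ hc)⟩
    simpa using K.add_mem (hK d hd c hc _ ht) (hK d₀ hd₀ c₁ hc₁ c₂ hc₂)
  have hlt : #(diffSet f d) < Nat.card K := by
    calc #(diffSet f d) = (diffSet f d : Set H).ncard := (Set.ncard_coe_finset _).symm
      _ ≤ ((K : Set H) \ {0}).ncard := Set.ncard_le_ncard hsub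
      _ < (K : Set H).ncard := Set.ncard_sdiff_singleton_lt_of_mem K.zero_mem
      _ = Nat.card K := Nat.card_coe_set_eq _
  refine K.eq_top_of_card_lt_two_mul ?_
  have hD := hf.two_mul_card_diffSet hd
  rw [Nat.card_eq_fintype_card (α := H)]
  omega

end DiffSet

section Graph

variable {G H : Type*} [AddCommGroup G] [AddCommGroup H] (f : G → H)

def incGraphTranslate (s : G × H) : incGraph f →g incGraph f where
  toFun := Sum.map (· + s) (· + s)
  map_rel' {v w} h := by
    have key : ∀ p l : G × H, Incid f p l → Incid f (p + s) (l + s) := by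
      rintro ⟨x, y⟩ ⟨a, b⟩ (h : y = f (x - a) + b)
      show y + s.2 = f (x + s.1 - (a + s.1)) + (b + s.2)
      rw [h, add_sub_add_right_eq_sub, add_assoc]
    rcases v with p | l <;> rcases w with q | l'
    exacts [h.elim, key p l' h, key q l h, h.elim]

lemma reachable_inr_add {l l' : G × H} (h : (incGraph f).Reachable (.inr l) (.inr l'))
    (s : G × H) : (incGraph f).Reachable (.inr (l + s)) (.inr (l' + s)) :=
  h.map (incGraphTranslate f s)

def s1Subgroup : AddSubgroup (G × H) where
  carrier := {l | InS1 f l}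
  zero_mem' := .refl _
  add_mem' {l l'} hl hl' := by
    have h := reachable_inr_add f hl l'
    rw [Prod.mk_zero_zero, zero_add] at h
    exact h.trans hl'
  neg_mem' {l} hl := by
    have h := (reachable_inr_add f hl (-l)).symm
    rwa [Prod.mk_zero_zero, zero_add, add_neg_cancel] at h

variable {f}

lemma mem_s1Subgroup_of_mem_diffSet [Fintype G] [DecidableEq H] {d : G} {c : H}
    (hc : c ∈ diffSet f d) : (d, c) ∈ s1Subgroup f := by
  obtain ⟨u, rfl⟩ := mem_diffSet.mp hc
  have hd : (incGraph f).Adj (.inr (d, f (u + d) - f u)) (.inl (u + d, f (u + d))) :=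
    show f (u + d) = f (u + d - d) + (f (u + d) - f u) by simp
  have h0 : (incGraph f).Adj (.inl (u + d, f (u + d))) (.inr ((0 : G), (0 : H))) :=
    show f (u + d) = f (u + d - 0) + 0 by simp
  exact hd.reachable.trans h0.reachable

lemma IsSemiPlanar.s1Subgroup_eq_top [Fintype G] [Fintype H] (hf : IsSemiPlanar f)
    (hbij : Bijective f) (hcard : Fintype.card G = Fintype.card H) (hk : 2 < Fintype.card G) :
    s1Subgroup f = ⊤ := by
  classical
  have hvert : (s1Subgroup f).comap (AddMonoidHom.inr G H) = ⊤ := by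
    refine hf.eq_top_of_sub_mem hbij hcard hk _ fun d _ c₁ hc₁ c₂ hc₂ => ?_
    simpa using sub_mem (mem_s1Subgroup_of_mem_diffSet hc₁) (mem_s1Subgroup_of_mem_diffSet hc₂)
  rw [eq_top_iff]
  rintro ⟨a, b⟩ -
  have hslope : (a, f (0 + a) - f 0) ∈ s1Subgroup f :=
    mem_s1Subgroup_of_mem_diffSet (mem_diffSet.mpr ⟨0, rfl⟩)
  have hshift : (0, b - (f (0 + a) - f 0)) ∈ s1Subgroup f :=
    AddSubgroup.mem_comap.mp (hvert ▸ AddSubgroup.mem_top _)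
  simpa using add_mem hslope hshift

end Graph

theorem connected_of_bijective_general {G H : Type*} [AddCommGroup G] [AddCommGroup H]
    [Fintype G] [Fintype H]
    (hcard : Fintype.card G = Fintype.card H)
    (f : G → H) (hf : IsSemiPlanar f)
    (hbij : Function.Bijective f) (hk : 2 < Fintype.card G) :
    (incGraph f).Connected := by
  have hline (l : G × H) : (incGraph f).Reachable (.inr l) (.inr 0) :=
    show l ∈ s1Subgroup f from hf.s1Subgroup_eq_top hbij hcard hk ▸ AddSubgroup.mem_top l
  have hpoint (p : G × H) : (incGraph f).Adj (.inl p) (.inr (p.1, p.2 - f 0)) :=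
    show p.2 = f (p.1 - p.1) + (p.2 - f 0) by simp
  refine (SimpleGraph.connected_iff_exists_forall_reachable _).mpr ⟨.inr 0, ?_⟩
  rintro (p | l)
  · exact ((hpoint p).reachable.trans (hline _)).symm
  · exact (hline l).symm

/-- If `f` is a bijective semi-planar function between finite abelian groups of the
same even order `k > 2`, then the incidence graph of `S(G,H;f)` is connected. -/
theorem connected_of_bijective {G H : Type*} [AddCommGroup G] [AddCommGroup H]
    [Fintype G] [Fintype H]
    (hcard : Fintype.card G = Fintype.card H) (heven : Even (Fintype.card G))
    (f : G → H) (hf : IsSemiPlanar f)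
    (hbij : Function.Bijective f) (hk : 2 < Fintype.card G) :
    (incGraph f).Connected :=
  connected_of_bijective_general hcard f hf hbij hk
end

section
/- Let f : G → H be a semi-planar function between finite abelian groups of the same even order k > 2, suppose the incidence graph of S(G,H;f) is not connected, and let h ∈ H with h ∉ P_0^1. Then the bijection of the vertex set of the incidence graph sending the point (x,y) to the point (x, y+h) and the line L(a,b) to the line L(a, b+h) is an automorphism of the incidence graph, and it maps the set of lines S_1 bijectively onto the set of lines S_2 (so it exchanges the two connected components). -/
/-- The vertex map sending the point `(x,y)` to `(x, y+h)` and the line `L(a,b)` to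
`L(a, b+h)`. -/
def shiftMap {G H : Type*} [Add H] (h : H) :
    (G × H) ⊕ (G × H) → (G × H) ⊕ (G × H)
  | Sum.inl p => Sum.inl (p.1, p.2 + h)
  | Sum.inr l => Sum.inr (l.1, l.2 + h)


/-!
Translating the `H`-coordinate by `h` preserves incidence, so it is a graph automorphism, and the
offsets `b` with `L(0,b) ∈ S₁` form a subgroup `P` of `H`. Joining `L(a,b)` to `L(0,b')` through a
common point shows `L(a,b) ∈ S₁ ↔ b + f 0 - f a ∈ P`, and every value `f (u + a) - f u` lies in
the coset `f a - f 0 + P`. For `a ≠ 0` semi-planarity says that these values take `|G| / 2`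
distinct values, so `|P| ≥ |H| / 2` and `P` has index at most `2`. Since `h ∉ P`, the index is
exactly `2`, and adding `h` exchanges `P` with its complement, i.e. `S₁` with `S₂`.
-/

section

open Finset

variable {G H : Type*} [AddGroup G] [AddCommGroup H] (f : G → H)

theorem incGraph_adj_shiftMap (h : H) (v w : (G × H) ⊕ (G × H)) :
    (incGraph f).Adj (shiftMap h v) (shiftMap h w) ↔ (incGraph f).Adj v w := by
  rcases v with p | l <;> rcases w with q | m
  · exact Iff.rfl
  · show p.2 + h = f (p.1 - m.1) + (m.2 + h) ↔ p.2 = f (p.1 - m.1) + m.2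
    rw [← add_assoc, add_left_inj]
  · show q.2 + h = f (q.1 - l.1) + (l.2 + h) ↔ q.2 = f (q.1 - l.1) + l.2
    rw [← add_assoc, add_left_inj]
  · exact Iff.rfl

def incGraphShift (h : H) : incGraph f ≃g incGraph f where
  toFun := shiftMap h
  invFun := shiftMap (-h)
  left_inv := by rintro (p | l) <;> simp [shiftMap]
  right_inv := by rintro (p | l) <;> simp [shiftMap]
  map_rel_iff' := incGraph_adj_shiftMap f h _ _

theorem reachable_shiftMap_iff (h : H) {v w : (G × H) ⊕ (G × H)} :
    (incGraph f).Reachable (shiftMap h v) (shiftMap h w) ↔ (incGraph f).Reachable v w :=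
  SimpleGraph.Iso.reachable_iff (φ := incGraphShift f h)

/-- Both lines pass through the point `(a, f 0 + b)`. -/
theorem reachable_line_line_zero (a : G) (b : H) :
    (incGraph f).Reachable (Sum.inr (a, b)) (Sum.inr (0, b + f 0 - f a)) := by
  have h₁ : (incGraph f).Adj (Sum.inr (a, b)) (Sum.inl (a, f 0 + b)) := by
    show f 0 + b = f (a - a) + b
    rw [sub_self]
  have h₂ : (incGraph f).Adj (Sum.inl (a, f 0 + b)) (Sum.inr (0, b + f 0 - f a)) := by
    show f 0 + b = f (a - 0) + (b + f 0 - f a)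
    rw [sub_zero]
    abel
  exact h₁.reachable.trans h₂.reachable

/-- The set `P_0^1` of offsets `b` with `L(0,b) ∈ S₁`. -/
def s1Offsets : AddSubgroup H where
  carrier := {b | InS1 f (0, b)}
  zero_mem' := SimpleGraph.Reachable.refl _
  add_mem' {x y} hx hy := by
    have hxy := (reachable_shiftMap_iff f y (v := Sum.inr (0, x)) (w := Sum.inr (0, 0))).2 hx
    simp only [shiftMap, zero_add] at hxy
    exact hxy.trans hy
  neg_mem' {x} hx := by
    have hx' := (reachable_shiftMap_iff f (-x) (v := Sum.inr (0, x)) (w := Sum.inr (0, 0))).2 hx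
    simp only [shiftMap, add_neg_cancel, zero_add] at hx'
    exact hx'.symm

theorem inS1_iff_mem_s1Offsets (a : G) (b : H) :
    InS1 f (a, b) ↔ b + f 0 - f a ∈ s1Offsets f :=
  ⟨(reachable_line_line_zero f a b).symm.trans, (reachable_line_line_zero f a b).trans⟩

/-- The lines `L(a, f (u + a) - f u)` and `L(0,0)` both pass through the point
`(u + a, f (u + a))`. -/
theorem sub_add_sub_mem_s1Offsets (a u : G) :
    f (u + a) - f u + f 0 - f a ∈ s1Offsets f := by
  rw [← inS1_iff_mem_s1Offsets]
  have h₁ : (incGraph f).Adj (Sum.inr (a, f (u + a) - f u)) (Sum.inl (u + a, f (u + a))) := by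
    show f (u + a) = f (u + a - a) + (f (u + a) - f u)
    rw [add_sub_cancel_right]
    abel
  have h₂ : (incGraph f).Adj (Sum.inl (u + a, f (u + a))) (Sum.inr (0, 0)) := by
    show f (u + a) = f (u + a - 0) + 0
    rw [sub_zero, add_zero]
  exact h₁.reachable.trans h₂.reachable

theorem card_le_two_mul_card_s1Offsets [Fintype G] [Fintype H] (hf : IsSemiPlanar f) {a : G}
    (ha : a ≠ 0) :
    Fintype.card G ≤ 2 * Nat.card (s1Offsets f) := by
  classical
  let d : G → H := fun u => f (u + a) - f u + f 0 - f a
  have hfiber : ∀ y, #{u | d u = y} ≤ 2 := by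
    intro y
    have hcard : Nat.card {u : G // f (u + a) - f u = y - f 0 + f a} = #{u | d u = y} := by
      rw [Nat.card_eq_fintype_card, Fintype.card_subtype]
      congr 1
      ext u
      simp only [Finset.mem_filter, Finset.mem_univ, true_and, d]
      constructor <;> intro hu
      · rw [hu]; abel
      · rw [← hu]; abel
    rcases hf a ha (y - f 0 + f a) with h0 | h2 <;> omega
  calc Fintype.card G
      ≤ 2 * #(s1Offsets f : Set H).toFinset :=
        Finset.card_le_mul_card_image_of_maps_to
          (fun u _ => Set.mem_toFinset.2 (sub_add_sub_mem_s1Offsets f a u)) 2 (fun y _ => hfiber y)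
    _ = 2 * Nat.card (s1Offsets f) := by
        rw [Set.toFinset_card, ← Nat.card_eq_fintype_card, SetLike.coe_sort_coe]

theorem index_s1Offsets_eq_two [Fintype G] [Fintype H]
    (hcard : Fintype.card G = Fintype.card H) (hf : IsSemiPlanar f) (hG : 1 < Fintype.card G)
    {h : H} (hh : h ∉ s1Offsets f) :
    (s1Offsets f).index = 2 := by
  obtain ⟨a, ha⟩ := Fintype.exists_ne_of_one_lt_card hG 0
  have hle := card_le_two_mul_card_s1Offsets f hf ha
  have hmul := (s1Offsets f).index_mul_card
  have hpos : 0 < Nat.card (s1Offsets f) := Nat.card_pos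
  have hne1 : (s1Offsets f).index ≠ 1 := fun h1 =>
    hh ((AddSubgroup.index_eq_one.1 h1) ▸ AddSubgroup.mem_top h)
  rw [Nat.card_eq_fintype_card (α := H), ← hcard] at hmul
  have : (s1Offsets f).index ≤ 2 := by nlinarith
  have : (s1Offsets f).index ≠ 0 := AddSubgroup.index_ne_zero_of_finite
  omega

theorem inS1_add_iff_not_inS1 (hidx : (s1Offsets f).index = 2) {h : H} (hh : h ∉ s1Offsets f)
    (a : G) (b : H) :
    InS1 f (a, b + h) ↔ ¬ InS1 f (a, b) := by
  rw [inS1_iff_mem_s1Offsets, inS1_iff_mem_s1Offsets, add_right_comm, add_sub_right_comm,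
    AddSubgroup.add_mem_iff_of_index_two hidx]
  tauto

end

theorem shift_is_isomorphism_general {G H : Type*} [AddCommGroup G] [AddCommGroup H]
    [Fintype G] [Fintype H]
    (hcard : Fintype.card G = Fintype.card H)
    (f : G → H) (hf : IsSemiPlanar f)
    (hk : 2 < Fintype.card G)
    (h : H) (hh : ¬ InS1 f ((0 : G), h)) :
    Function.Bijective (shiftMap (G := G) h) ∧
    (∀ v w : (G × H) ⊕ (G × H),
      (incGraph f).Adj (shiftMap h v) (shiftMap h w) ↔ (incGraph f).Adj v w) ∧
    (fun l : G × H => (l.1, l.2 + h)) '' {l : G × H | InS1 f l}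
      = {l : G × H | ¬ InS1 f l} := by
  have hidx := index_s1Offsets_eq_two f hcard hf (by omega) hh
  refine ⟨(incGraphShift f h).bijective, incGraph_adj_shiftMap f h, ?_⟩
  ext ⟨a, b⟩
  constructor
  · rintro ⟨⟨a', b'⟩, hl, he⟩
    obtain ⟨rfl, rfl⟩ := Prod.mk.inj he
    exact fun hs => (inS1_add_iff_not_inS1 f hidx hh a' b').1 hs hl
  · intro hn
    refine ⟨(a, b - h), ?_, by simp⟩
    by_contra hs
    exact hn (by simpa using (inS1_add_iff_not_inS1 f hidx hh a (b - h)).2 hs)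

/-- If `k > 2`, the incidence graph of `S(G,H;f)` is not connected, and `h ∉ P_0^1`,
then the bijection `(x,y) ↦ (x,y+h)`, `L(a,b) ↦ L(a,b+h)` is an automorphism of the
incidence graph mapping `S₁` bijectively onto `S₂`. -/
theorem shift_is_isomorphism {G H : Type*} [AddCommGroup G] [AddCommGroup H]
    [Fintype G] [Fintype H]
    (hcard : Fintype.card G = Fintype.card H) (heven : Even (Fintype.card G))
    (f : G → H) (hf : IsSemiPlanar f)
    (hk : 2 < Fintype.card G) (hnc : ¬ (incGraph f).Connected)
    (h : H) (hh : ¬ InS1 f ((0 : G), h)) :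
    Function.Bijective (shiftMap (G := G) h) ∧
    (∀ v w : (G × H) ⊕ (G × H),
      (incGraph f).Adj (shiftMap h v) (shiftMap h w) ↔ (incGraph f).Adj v w) ∧
    (fun l : G × H => (l.1, l.2 + h)) '' {l : G × H | InS1 f l}
      = {l : G × H | ¬ InS1 f l} :=
  shift_is_isomorphism_general hcard f hf hk h hh
end
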